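/- Laplace mechanism: let f : D → ℝ have L1-sensitivity θ, i.e., |f(X) − f(X')| ≤ θ for all neighboring X, X'. Then the mechanism M(X) = f(X) + Z, where Z has Laplace distribution with scale θ/ε, satisfies (ε, 0)-differential privacy. -/

import Mathlib

/-!
Translating the Laplace density by `a` instead of `b` changes it pointwise by a factor of at most
`exp (|a - b| / λ)`, by the triangle inequality for `|·|`. Hence the shifted Laplace measures
satisfy `μ_a ≤ exp (|a - b| / λ) • μ_b`, and with `|f X - f X'| ≤ θ` and `λ = θ / ε` that factor
is at most `exp ε`.
-/

open MeasureTheory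

/-- The Laplace distribution on `ℝ` with scale `lam`, with density
`(1/(2·lam)) · exp(−|x|/lam)` with respect to Lebesgue measure. -/
noncomputable def laplaceMeasure (lam : ℝ) : Measure ℝ :=
  volume.withDensity fun x => ENNReal.ofReal ((2 * lam)⁻¹ * Real.exp (-|x| / lam))

open scoped ENNReal

noncomputable def laplacePDF (lam x : ℝ) : ℝ :=
  (2 * lam)⁻¹ * Real.exp (-|x| / lam)

lemma laplaceMeasure_eq_withDensity (lam : ℝ) :
    laplaceMeasure lam = volume.withDensity fun x => ENNReal.ofReal (laplacePDF lam x) :=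
  rfl

lemma laplacePDF_le_exp_mul {lam : ℝ} (hlam : 0 ≤ lam) (x y : ℝ) :
    laplacePDF lam x ≤ Real.exp (|x - y| / lam) * laplacePDF lam y := by
  have hexp : Real.exp (-|x| / lam) ≤ Real.exp (|x - y| / lam) * Real.exp (-|y| / lam) := by
    rw [← Real.exp_add, ← add_div]
    gcongr
    linarith [abs_sub_abs_le_abs_sub y x, abs_sub_comm x y]
  unfold laplacePDF
  rw [mul_left_comm]
  gcongr

lemma map_const_add_withDensity {G : Type*} [MeasurableSpace G] [AddGroup G] [MeasurableAdd G]
    (μ : Measure G) [μ.IsAddLeftInvariant] (g : G → ℝ≥0∞) (c : G) :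
    (μ.withDensity g).map (c + ·) = μ.withDensity fun y => g (-c + y) := by
  ext O hO
  have hpre : MeasurableSet ((c + ·) ⁻¹' O) := measurable_const_add c hO
  rw [Measure.map_apply (measurable_const_add c) hO, withDensity_apply _ hpre,
    withDensity_apply _ hO,
    ← (measurePreserving_add_left μ c).setLIntegral_comp_preimage_emb
      (MeasurableEquiv.addLeft c).measurableEmbedding (fun y => g (-c + y))]
  simp only [neg_add_cancel_left]

lemma withDensity_le_smul_withDensity {α : Type*} [MeasurableSpace α] {μ : Measure α}
    {f g : α → ℝ≥0∞} {K : ℝ≥0∞} (hK : K ≠ ∞) (hfg : ∀ x, f x ≤ K * g x) :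
    μ.withDensity f ≤ K • μ.withDensity g := by
  rw [← withDensity_smul' K g hK]
  exact withDensity_mono (Filter.Eventually.of_forall hfg)

lemma laplaceMeasure_map_const_add_le {lam : ℝ} (hlam : 0 ≤ lam) (a b : ℝ) :
    (laplaceMeasure lam).map (a + ·) ≤
      ENNReal.ofReal (Real.exp (|a - b| / lam)) • (laplaceMeasure lam).map (b + ·) := by
  rw [laplaceMeasure_eq_withDensity, map_const_add_withDensity, map_const_add_withDensity]
  refine withDensity_le_smul_withDensity ENNReal.ofReal_ne_top fun y => ?_
  rw [← ENNReal.ofReal_mul (Real.exp_nonneg _)]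
  refine ENNReal.ofReal_le_ofReal ?_
  have h := laplacePDF_le_exp_mul hlam (-a + y) (-b + y)
  rwa [show -a + y - (-b + y) = -(a - b) by ring, abs_neg] at h

/-- Laplace mechanism: if `f` has L1-sensitivity `θ`, then `M(X) = f(X) + Z`
with `Z` Laplace-distributed with scale `θ/ε` satisfies `(ε, 0)`-differential
privacy. -/
theorem laplace_mechanism_dp {D : Type*} (Neighbor : D → D → Prop) (f : D → ℝ)
    (θ ε : ℝ) (hθ : 0 < θ) (hε : 0 < ε)
    (hsens : ∀ X X', Neighbor X X' → |f X - f X'| ≤ θ) :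
    ∀ X X', Neighbor X X' → ∀ O : Set ℝ, MeasurableSet O →
      (laplaceMeasure (θ / ε)).map (fun z => f X + z) O ≤
        ENNReal.ofReal (Real.exp ε) *
          (laplaceMeasure (θ / ε)).map (fun z => f X' + z) O := by
  intro X X' hN O _
  have hscale : 0 < θ / ε := div_pos hθ hε
  have hfactor : |f X - f X'| / (θ / ε) ≤ ε := by
    rw [div_le_iff₀ hscale, mul_div_cancel₀ θ hε.ne']
    exact hsens X X' hN
  calc (laplaceMeasure (θ / ε)).map (fun z => f X + z) O
      ≤ ENNReal.ofReal (Real.exp (|f X - f X'| / (θ / ε))) *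
          (laplaceMeasure (θ / ε)).map (fun z => f X' + z) O :=
        Measure.le_iff'.1 (laplaceMeasure_map_const_add_le hscale.le _ _) O
    _ ≤ ENNReal.ofReal (Real.exp ε) * (laplaceMeasure (θ / ε)).map (fun z => f X' + z) O := by
        gcongr
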